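/- For every integer n ≥ 2, the lower rank of the additive semigroup A^+(B_n) is r2(A^+(B_n)) = n(n! + 1). -/

import Mathlib

/-- The Brandt semigroup `B_n`, modeled as `Option (Fin n × Fin n)` where
`none` plays the role of the (two-sided) zero element `ϑ`. -/
def Brandt (n : ℕ) : Type := Option (Fin n × Fin n)

instance (n : ℕ) : DecidableEq (Brandt n) :=
  inferInstanceAs (DecidableEq (Option (Fin n × Fin n)))

instance (n : ℕ) : Fintype (Brandt n) :=
  inferInstanceAs (Fintype (Option (Fin n × Fin n)))

namespace Brandt

/-- The zero element `ϑ` of `B_n`. -/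
def theta (n : ℕ) : Brandt n := none

/-- The element `(i, j)` of `B_n`. -/
def pair {n : ℕ} (i j : Fin n) : Brandt n := some (i, j)

/-- The addition of the Brandt semigroup:
`(i,j) + (k,l) = (i,l)` if `j = k` and `ϑ` otherwise; `ϑ` is absorbing. -/
def add {n : ℕ} : Option (Fin n × Fin n) → Option (Fin n × Fin n) → Option (Fin n × Fin n)
  | some (i, j), some (k, l) => if j = k then some (i, l) else none
  | _, _ => none

instance (n : ℕ) : Add (Brandt n) := ⟨fun a b => Brandt.add a b⟩

end Brandt

/-- `M(B_n)`: all self-maps of `B_n`, with pointwise addition. -/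
abbrev MB (n : ℕ) := Brandt n → Brandt n

/-- `g` is an endomorphism of `(B_n, +)`. -/
def IsEndo {n : ℕ} (g : MB n) : Prop := ∀ a b : Brandt n, g (a + b) = g a + g b

/-- `g` is an automorphism of `(B_n, +)`. -/
def IsAuto {n : ℕ} (g : MB n) : Prop := IsEndo g ∧ Function.Bijective g

/-- The constant map `ξ_c` on `B_n` with value `c`. -/
def xi {n : ℕ} (c : Brandt n) : MB n := fun _ => c

/-- `C_{B_n}`, the set of all constant maps on `B_n`. -/
def ConstMaps (n : ℕ) : Set (MB n) := {f | ∃ c : Brandt n, f = xi c}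

/-- `f` is an affine map: a sum of an endomorphism and a constant map. -/
def IsAffine {n : ℕ} (f : MB n) : Prop := ∃ g c, IsEndo g ∧ f = g + xi c

/-- `A^+(B_n)`: the subsemigroup of `(M(B_n), +)` generated by the affine maps. -/
def Aplus (n : ℕ) : AddSubsemigroup (MB n) := AddSubsemigroup.closure {f | IsAffine f}

/-- `A^+(B_n)` as a set of maps. -/
def AplusSet (n : ℕ) : Set (MB n) := (Aplus n : Set (MB n))

/-- The support of `f`: the set of elements not mapped to `ϑ`. -/
def supp {n : ℕ} (f : MB n) : Set (Brandt n) := {a | f a ≠ Brandt.theta n}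

/-- `X_k`: the set of `k`-support elements of `X`. -/
def supportPart {n : ℕ} (X : Set (MB n)) (k : ℕ) : Set (MB n) :=
  {f ∈ X | (supp f).ncard = k}

/-- A subset `U` of an additive semigroup is independent if no element of `U`
lies in the subsemigroup generated by the remaining elements of `U`. -/
def IndepSet {β : Type*} [Add β] (U : Set β) : Prop :=
  ∀ a ∈ U, a ∉ AddSubsemigroup.closure (U \ {a})

/-- The `n`-support map `(p, q; σ)`, sending `(i, p)` to `(iσ, q)` and
everything else to `ϑ`. -/
def nMap {n : ℕ} (p q : Fin n) (σ : Equiv.Perm (Fin n)) : MB n := fun a =>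
  Option.elim (α := Fin n × Fin n) a (Brandt.theta n)
    (fun x => if x.2 = p then Brandt.pair (σ x.1) q else Brandt.theta n)

/-- The singleton support map `⟨(k, l), α⟩`, sending `(k, l)` to `α` and
everything else to `ϑ`. -/
def sMap {n : ℕ} (k l : Fin n) (α : Brandt n) : MB n :=
  fun a => if a = Brandt.pair k l then α else Brandt.theta n

/-- The set `S = {ξ_(i, i+1) : i ∈ [n-1]} ∪ {ξ_(n, 1)}`, i.e. the constant maps
`ξ_(i, i+1)` where the successor is taken cyclically in `[n]`. -/
def setS (n : ℕ) : Set (MB n) := {f | ∃ i : Fin n, f = xi (Brandt.pair i (finRotate n i))}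

/-- The set `T = {g + h : g ∈ Aut(B_n), h ∈ S}`. -/
def setT (n : ℕ) : Set (MB n) := {f | ∃ g h, IsAuto g ∧ h ∈ setS n ∧ f = g + h}

/-! ### Auxiliary development -/

section Aux

open Brandt

variable {n : ℕ}

@[simp] lemma add_theta' (a : Brandt n) : a + theta n = theta n := by
  rcases a with _ | ⟨i, j⟩ <;> rfl

@[simp] lemma theta_add' (a : Brandt n) : theta n + a = theta n := by
  rcases a with _ | ⟨i, j⟩ <;> rfl

@[simp] lemma pair_add_pair (i j k l : Fin n) :
    pair i j + pair k l = if j = k then pair i l else theta n := rfl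

@[simp] lemma pair_ne_theta (i j : Fin n) : pair i j ≠ theta n := fun h =>
  Option.some_ne_none _ h

@[simp] lemma theta_ne_pair (i j : Fin n) : theta n ≠ pair i j := fun h =>
  (Option.some_ne_none _ h.symm)

lemma pair_inj {i j k l : Fin n} (h : pair i j = pair k l) : i = k ∧ j = l := by
  have h' : ((i, j) : Fin n × Fin n) = (k, l) := Option.some_injective _ h
  exact ⟨congrArg Prod.fst h', congrArg Prod.snd h'⟩

lemma brandt_cases (a : Brandt n) : a = theta n ∨ ∃ i j, a = pair i j := by
  rcases a with _ | ⟨i, j⟩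
  · exact Or.inl rfl
  · exact Or.inr ⟨i, j, rfl⟩

lemma ne_theta_of_add {a b : Brandt n} (h : a + b ≠ theta n) :
    a ≠ theta n ∧ b ≠ theta n := by
  constructor
  · rintro rfl; simp at h
  · rintro rfl; simp at h

lemma add_eq_pair {a b : Brandt n} {p q : Fin n} (h : a + b = pair p q) :
    ∃ r, a = pair p r ∧ b = pair r q := by
  have hne : a + b ≠ theta n := by rw [h]; exact pair_ne_theta p q
  obtain ⟨ha, hb⟩ := ne_theta_of_add hne
  rcases brandt_cases a with rfl | ⟨i, j, rfl⟩; · exact absurd rfl ha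
  rcases brandt_cases b with rfl | ⟨k, l, rfl⟩; · exact absurd rfl hb
  rw [pair_add_pair] at h
  by_cases hjk : j = k
  · subst hjk
    simp only [if_pos rfl] at h
    obtain ⟨h1, h2⟩ := pair_inj h
    exact ⟨j, by rw [h1], by rw [h2]⟩
  · rw [if_neg hjk] at h; exact absurd h (theta_ne_pair _ _)

@[simp] lemma xi_apply (c : Brandt n) (a : Brandt n) : xi c a = c := rfl

lemma xi_inj {c d : Brandt n} (h : xi c = xi d) : c = d := congrFun h (theta n)

@[simp] lemma mb_add_apply (f g : MB n) (a : Brandt n) : (f + g) a = f a + g a := rfl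

/-- The endomorphism of `B_n` induced by a permutation `σ` of `[n]`. -/
def gmap {n : ℕ} (σ : Equiv.Perm (Fin n)) : MB n := fun a =>
  Option.elim (α := Fin n × Fin n) a (Brandt.theta n)
    (fun x => Brandt.pair (σ x.1) (σ x.2))

@[simp] lemma gmap_theta (σ : Equiv.Perm (Fin n)) : gmap σ (theta n) = theta n := rfl

@[simp] lemma gmap_pair (σ : Equiv.Perm (Fin n)) (i j : Fin n) :
    gmap σ (pair i j) = pair (σ i) (σ j) := rfl

@[simp] lemma nMap_theta (l q : Fin n) (σ : Equiv.Perm (Fin n)) :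
    nMap l q σ (theta n) = theta n := rfl

@[simp] lemma nMap_pair (l q : Fin n) (σ : Equiv.Perm (Fin n)) (i j : Fin n) :
    nMap l q σ (pair i j) = if j = l then pair (σ i) q else theta n := rfl

@[simp] lemma sMap_theta (k l : Fin n) (α : Brandt n) :
    sMap k l α (theta n) = theta n := by
  unfold sMap
  rw [if_neg (theta_ne_pair k l)]

@[simp] lemma sMap_pair (k l : Fin n) (α : Brandt n) (i j : Fin n) :
    sMap k l α (pair i j) = if i = k ∧ j = l then α else theta n := by
  unfold sMap
  by_cases h : (pair i j : Brandt n) = pair k l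
  · obtain ⟨h1, h2⟩ := pair_inj h
    rw [if_pos h, if_pos ⟨h1, h2⟩]
  · rw [if_neg h, if_neg (by rintro ⟨rfl, rfl⟩; exact h rfl)]

end Aux

section Aux2

open Brandt

variable {n : ℕ}

lemma isEndo_gmap (σ : Equiv.Perm (Fin n)) : IsEndo (gmap σ) := by
  intro a b
  rcases brandt_cases a with rfl | ⟨i, j, rfl⟩
  · simp
  rcases brandt_cases b with rfl | ⟨k, l, rfl⟩
  · simp
  by_cases h : j = k
  · subst h; simp
  · have h' : σ j ≠ σ k := fun hc => h (σ.injective hc)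
    simp [h, h']

lemma isEndo_xi_theta : IsEndo (xi (theta n)) := by
  intro a b; simp

lemma isEndo_xi_idem (i : Fin n) : IsEndo (xi (pair i i)) := by
  intro a b; simp

lemma bijective_gmap (σ : Equiv.Perm (Fin n)) : Function.Bijective (gmap σ) := by
  rw [Function.bijective_iff_has_inverse]
  refine ⟨gmap σ.symm, fun a => ?_, fun a => ?_⟩ <;>
    rcases brandt_cases a with rfl | ⟨i, j, rfl⟩ <;> simp

/-- Classification of the endomorphisms of `B_n`. -/
lemma endo_class {g : MB n} (hg : IsEndo g) :
    g = xi (theta n) ∨ (∃ i : Fin n, g = xi (pair i i)) ∨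
      ∃ σ : Equiv.Perm (Fin n), g = gmap σ := by
  have hidem : g (theta n) + g (theta n) = g (theta n) := by
    have := hg (theta n) (theta n); rw [theta_add'] at this; exact this.symm
  rcases brandt_cases (g (theta n)) with hθ | ⟨i, j, hθ⟩
  · -- g θ = θ
    by_cases hD : ∃ i : Fin n, g (pair i i) = theta n
    · -- g is the zero map
      obtain ⟨i, hi⟩ := hD
      left
      have hall : ∀ j : Fin n, g (pair j j) = theta n := by
        intro j
        have h1 : g (pair j i) = theta n := by
          have := hg (pair j i) (pair i i)
          rw [pair_add_pair, if_pos rfl, hi, add_theta'] at this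
          exact this
        have := hg (pair j i) (pair i j)
        rw [pair_add_pair, if_pos rfl, h1, theta_add'] at this
        exact this
      funext a
      rcases brandt_cases a with rfl | ⟨k, l, rfl⟩
      · exact hθ
      · have := hg (pair k k) (pair k l)
        rw [pair_add_pair, if_pos rfl, hall k, theta_add'] at this
        exact this
    · -- g is induced by a permutation
      right; right
      push_neg at hD
      have hidem2 : ∀ i : Fin n, ∃ u : Fin n, g (pair i i) = pair u u := by
        intro i
        rcases brandt_cases (g (pair i i)) with h | ⟨u, v, h⟩
        · exact absurd h (hD i)
        · refine ⟨u, ?_⟩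
          have h2 : g (pair i i) + g (pair i i) = g (pair i i) := by
            have := hg (pair i i) (pair i i)
            rw [pair_add_pair, if_pos rfl] at this
            exact this.symm
          rw [h, pair_add_pair] at h2
          by_cases hvu : v = u
          · subst hvu; rw [h]
          · rw [if_neg hvu] at h2
            exact absurd h2 (theta_ne_pair u v)
      choose s hs using hidem2
      have hsinj : Function.Injective s := by
        intro i j hij
        by_contra hne
        have hij' : i ≠ j := fun hc => hne (by rw [hc])
        have := hg (pair i i) (pair j j)
        rw [pair_add_pair, if_neg hij', hθ, hs, hs, pair_add_pair, if_pos hij] at this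
        exact (pair_ne_theta _ _) this.symm
      set σ := Equiv.ofBijective s (Finite.injective_iff_bijective.mp hsinj) with hσ
      refine ⟨σ, ?_⟩
      have hval : ∀ i j : Fin n, g (pair i j) = pair (s i) (s j) := by
        intro i j
        have hnz : g (pair i j) ≠ theta n := by
          intro hz
          have := hg (pair i j) (pair j i)
          rw [pair_add_pair, if_pos rfl, hz, theta_add', hs] at this
          exact (pair_ne_theta _ _) this
        obtain ⟨u, v, huv⟩ := (brandt_cases (g (pair i j))).resolve_left hnz
        have h1 : g (pair i j) = g (pair i i) + g (pair i j) := by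
          have := hg (pair i i) (pair i j)
          rw [pair_add_pair, if_pos rfl] at this
          exact this
        rw [huv, hs, pair_add_pair] at h1
        have hu : s i = u := by
          by_contra hc
          rw [if_neg hc] at h1
          exact (pair_ne_theta _ _) h1
        rw [if_pos hu] at h1
        obtain ⟨-, hv⟩ := pair_inj h1
        have h2 : g (pair i j) = g (pair i j) + g (pair j j) := by
          have := hg (pair i j) (pair j j)
          rw [pair_add_pair, if_pos rfl] at this
          exact this
        rw [huv, hs, pair_add_pair] at h2
        have hv2 : v = s j := by
          by_contra hc
          rw [if_neg hc] at h2
          exact (pair_ne_theta _ _) h2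
        rw [huv, ← hu, hv2]
      funext a
      rcases brandt_cases a with rfl | ⟨i, j, rfl⟩
      · rw [hθ, gmap_theta]
      · rw [hval, gmap_pair]; rfl
  · -- g θ is a nonzero idempotent, so g is constant
    right; left
    have hji : j = i := by
      rw [hθ, pair_add_pair] at hidem
      by_contra hc
      rw [if_neg hc] at hidem
      exact (pair_ne_theta _ _) hidem.symm
    subst hji
    refine ⟨j, ?_⟩
    funext a
    have h1 : pair j j = g a + pair j j := by
      have := hg a (theta n)
      rw [add_theta', hθ] at this
      exact this
    rcases brandt_cases (g a) with hz | ⟨u, v, huv⟩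
    · rw [hz, theta_add'] at h1
      exact absurd h1 (pair_ne_theta j j)
    · rw [huv, pair_add_pair] at h1
      have hv : v = j := by
        by_contra hc
        rw [if_neg hc] at h1
        exact (pair_ne_theta _ _) h1
      subst hv
      rw [if_pos rfl] at h1
      obtain ⟨hu, -⟩ := pair_inj h1
      rw [xi_apply, huv, ← hu]

end Aux2

section Aux3

open Brandt

variable {n : ℕ}

lemma gmap_add_xi (σ : Equiv.Perm (Fin n)) (p q : Fin n) :
    gmap σ + xi (pair p q) = nMap (σ.symm p) q σ := by
  funext a
  rcases brandt_cases a with rfl | ⟨i, j, rfl⟩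
  · simp
  · rw [mb_add_apply, gmap_pair, xi_apply, pair_add_pair, nMap_pair]
    by_cases h : σ j = p
    · rw [if_pos h, if_pos (by rw [← h, Equiv.symm_apply_apply])]
    · rw [if_neg h, if_neg (fun hc => h (by rw [hc, Equiv.apply_symm_apply]))]

lemma isAffine_xi (c : Brandt n) : IsAffine (xi c) := by
  rcases brandt_cases c with rfl | ⟨p, q, rfl⟩
  · refine ⟨xi (theta n), theta n, isEndo_xi_theta, ?_⟩
    funext a; simp
  · refine ⟨xi (pair p p), pair p q, isEndo_xi_idem p, ?_⟩
    funext a; simp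

lemma isAffine_nMap (l q : Fin n) (σ : Equiv.Perm (Fin n)) : IsAffine (nMap l q σ) := by
  refine ⟨gmap σ, pair (σ l) q, isEndo_gmap σ, ?_⟩
  rw [gmap_add_xi, Equiv.symm_apply_apply]

/-- Classification of the affine maps on `B_n`. -/
lemma affine_class {f : MB n} (hf : IsAffine f) :
    (∃ c, f = xi c) ∨ ∃ σ l q, f = nMap l q σ := by
  obtain ⟨g, c, hg, rfl⟩ := hf
  rcases endo_class hg with rfl | ⟨i, rfl⟩ | ⟨σ, rfl⟩
  · left
    exact ⟨theta n, by funext a; simp⟩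
  · left
    exact ⟨pair i i + c, by funext a; simp⟩
  · rcases brandt_cases c with rfl | ⟨p, q, rfl⟩
    · left
      exact ⟨theta n, by funext a; simp⟩
    · right
      exact ⟨σ, σ.symm p, q, (gmap_add_xi σ p q)⟩

lemma nMap_inj {l q l' q' : Fin n} {σ σ' : Equiv.Perm (Fin n)}
    (h : nMap l q σ = nMap l' q' σ') : l = l' ∧ q = q' ∧ σ = σ' := by
  have hl : l = l' := by
    by_contra hc
    have := congrFun h (pair l l)
    rw [nMap_pair, nMap_pair, if_pos rfl, if_neg hc] at this
    exact (pair_ne_theta _ _) this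
  subst hl
  have hq : ∀ i : Fin n, σ i = σ' i ∧ q = q' := by
    intro i
    have := congrFun h (pair i l)
    rw [nMap_pair, nMap_pair, if_pos rfl, if_pos rfl] at this
    exact pair_inj this
  exact ⟨rfl, (hq l).2, Equiv.ext fun i => (hq i).1⟩

/-! Computation of sums of the three kinds of maps. -/

lemma xi_add_xi (c d : Brandt n) : xi c + xi d = xi (c + d) := rfl

lemma add_sMap (f : MB n) (k l : Fin n) (α : Brandt n) :
    f + sMap k l α = sMap k l (f (pair k l) + α) := by
  funext a
  rcases brandt_cases a with rfl | ⟨i, j, rfl⟩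
  · simp
  · rw [mb_add_apply, sMap_pair, sMap_pair]
    by_cases h : i = k ∧ j = l
    · obtain ⟨rfl, rfl⟩ := h
      rw [if_pos ⟨rfl, rfl⟩, if_pos ⟨rfl, rfl⟩]
    · rw [if_neg h, if_neg h, add_theta']

lemma sMap_add (f : MB n) (k l : Fin n) (α : Brandt n) :
    sMap k l α + f = sMap k l (α + f (pair k l)) := by
  funext a
  rcases brandt_cases a with rfl | ⟨i, j, rfl⟩
  · simp
  · rw [mb_add_apply, sMap_pair, sMap_pair]
    by_cases h : i = k ∧ j = l
    · obtain ⟨rfl, rfl⟩ := h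
      rw [if_pos ⟨rfl, rfl⟩, if_pos ⟨rfl, rfl⟩]
    · rw [if_neg h, if_neg h, theta_add']

lemma xi_theta_add (f : MB n) : xi (theta n) + f = xi (theta n) := by
  funext a; rw [mb_add_apply, xi_apply, theta_add']

lemma add_xi_theta (f : MB n) : f + xi (theta n) = xi (theta n) := by
  funext a; rw [mb_add_apply, xi_apply, add_theta']

lemma xi_add_nMap (p r : Fin n) (l q : Fin n) (σ : Equiv.Perm (Fin n)) :
    xi (pair p r) + nMap l q σ = sMap (σ.symm r) l (pair p q) := by
  funext a
  rcases brandt_cases a with rfl | ⟨i, j, rfl⟩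
  · simp
  · rw [mb_add_apply, xi_apply, nMap_pair, sMap_pair]
    by_cases hj : j = l
    · rw [if_pos hj, pair_add_pair]
      by_cases hi : r = σ i
      · rw [if_pos hi, if_pos ⟨by rw [hi, Equiv.symm_apply_apply], hj⟩]
      · rw [if_neg hi, if_neg (by rintro ⟨rfl, rfl⟩; exact hi (Equiv.apply_symm_apply σ r).symm)]
    · rw [if_neg hj, add_theta', if_neg (by rintro ⟨rfl, rfl⟩; exact hj rfl)]

lemma nMap_add_xi_matched (l q q' : Fin n) (σ : Equiv.Perm (Fin n)) :
    nMap l q σ + xi (pair q q') = nMap l q' σ := by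
  funext a
  rcases brandt_cases a with rfl | ⟨i, j, rfl⟩
  · simp
  · rw [mb_add_apply, xi_apply, nMap_pair, nMap_pair]
    by_cases hj : j = l
    · rw [if_pos hj, if_pos hj, pair_add_pair, if_pos rfl]
    · rw [if_neg hj, if_neg hj, theta_add']

lemma nMap_add_xi_unmatched (l q : Fin n) (σ : Equiv.Perm (Fin n)) {p q' : Fin n}
    (h : q ≠ p) : nMap l q σ + xi (pair p q') = xi (theta n) := by
  funext a
  rcases brandt_cases a with rfl | ⟨i, j, rfl⟩
  · simp
  · rw [mb_add_apply, xi_apply, nMap_pair, xi_apply]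
    by_cases hj : j = l
    · rw [if_pos hj, pair_add_pair, if_neg h]
    · rw [if_neg hj, theta_add']

lemma nMap_add_nMap_same (l q q₂ : Fin n) (σ σ₂ : Equiv.Perm (Fin n)) :
    nMap l q σ + nMap l q₂ σ₂ = sMap (σ₂.symm q) l (pair (σ (σ₂.symm q)) q₂) := by
  funext a
  rcases brandt_cases a with rfl | ⟨i, j, rfl⟩
  · simp
  · rw [mb_add_apply, nMap_pair, nMap_pair, sMap_pair]
    by_cases hj : j = l
    · rw [if_pos hj, if_pos hj, pair_add_pair]
      by_cases hi : q = σ₂ i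
      · have hi' : i = σ₂.symm q := by rw [hi, Equiv.symm_apply_apply]
        rw [if_pos hi, if_pos ⟨hi', hj⟩, hi']
      · rw [if_neg hi, if_neg (by rintro ⟨rfl, rfl⟩; exact hi (Equiv.apply_symm_apply σ₂ q).symm)]
    · rw [if_neg hj, if_neg hj, theta_add', if_neg (by rintro ⟨rfl, rfl⟩; exact hj rfl)]

lemma nMap_add_nMap_diff {l l₂ : Fin n} (h : l ≠ l₂) (q q₂ : Fin n)
    (σ σ₂ : Equiv.Perm (Fin n)) : nMap l q σ + nMap l₂ q₂ σ₂ = xi (theta n) := by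
  funext a
  rcases brandt_cases a with rfl | ⟨i, j, rfl⟩
  · simp
  · rw [mb_add_apply, nMap_pair, nMap_pair, xi_apply]
    by_cases hj : j = l
    · rw [if_pos hj, if_neg (fun hc => h (hj.symm.trans hc)), add_theta']
    · rw [if_neg hj, theta_add']

end Aux3

section Aux4

open Brandt

variable {n : ℕ}

/-- The three classes of maps making up `A⁺(Bₙ)`. -/
def Cls (f : MB n) : Prop :=
  (∃ c, f = xi c) ∨ (∃ σ l q, f = nMap l q σ) ∨ ∃ k l α, f = sMap k l α

lemma Cls_add {y z : MB n} (hy : Cls y) (hz : Cls z) : Cls (y + z) := by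
  rcases hz with ⟨d, rfl⟩ | ⟨σ₂, l₂, q₂, rfl⟩ | ⟨k, l, α, rfl⟩
  · -- z = xi d
    rcases hy with ⟨c, rfl⟩ | ⟨σ, l, q, rfl⟩ | ⟨k, l, α, rfl⟩
    · exact Or.inl ⟨c + d, xi_add_xi c d⟩
    · rcases brandt_cases d with rfl | ⟨p, q', rfl⟩
      · exact Or.inl ⟨theta n, add_xi_theta _⟩
      · by_cases hqp : q = p
        · subst hqp
          exact Or.inr (Or.inl ⟨σ, l, q', nMap_add_xi_matched l q q' σ⟩)
        · exact Or.inl ⟨theta n, nMap_add_xi_unmatched l q σ hqp⟩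
    · exact Or.inr (Or.inr ⟨k, l, _, sMap_add _ k l α⟩)
  · -- z = nMap
    rcases hy with ⟨c, rfl⟩ | ⟨σ, l, q, rfl⟩ | ⟨k, l, α, rfl⟩
    · rcases brandt_cases c with rfl | ⟨p, r, rfl⟩
      · exact Or.inl ⟨theta n, xi_theta_add _⟩
      · exact Or.inr (Or.inr ⟨σ₂.symm r, l₂, _, xi_add_nMap p r l₂ q₂ σ₂⟩)
    · by_cases hl : l = l₂
      · subst hl
        exact Or.inr (Or.inr ⟨σ₂.symm q, l, _, nMap_add_nMap_same l q q₂ σ σ₂⟩)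
      · exact Or.inl ⟨theta n, nMap_add_nMap_diff hl q q₂ σ σ₂⟩
    · exact Or.inr (Or.inr ⟨k, l, _, sMap_add _ k l α⟩)
  · -- z = sMap
    exact Or.inr (Or.inr ⟨k, l, _, add_sMap y k l α⟩)

lemma aplus_class {f : MB n} (hf : f ∈ AplusSet n) : Cls f := by
  have hf' : f ∈ Aplus n := hf
  clear hf
  induction hf' using AddSubsemigroup.closure_induction with
  | mem x hx =>
    rcases affine_class hx with ⟨c, rfl⟩ | ⟨σ, l, q, rfl⟩
    · exact Or.inl ⟨c, rfl⟩
    · exact Or.inr (Or.inl ⟨σ, l, q, rfl⟩)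
  | add x y hx hy ihx ihy => exact Cls_add ihx ihy

lemma xi_ne_nMap (c : Brandt n) (l q : Fin n) (σ : Equiv.Perm (Fin n)) :
    xi c ≠ nMap l q σ := by
  intro h
  have h1 := congrFun h (theta n)
  rw [xi_apply, nMap_theta] at h1
  have h2 := congrFun h (pair l l)
  rw [xi_apply, nMap_pair, if_pos rfl, h1] at h2
  exact (theta_ne_pair _ _) h2

lemma sMap_ne_nMap (hn : 2 ≤ n) (k l' : Fin n) (α : Brandt n) (l q : Fin n)
    (σ : Equiv.Perm (Fin n)) : sMap k l' α ≠ nMap l q σ := by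
  intro h
  have hkey : ∀ i : Fin n, i = k := by
    intro i
    have := congrFun h (pair i l)
    rw [sMap_pair, nMap_pair, if_pos rfl] at this
    by_cases hc : i = k ∧ l = l'
    · exact hc.1
    · rw [if_neg hc] at this
      exact absurd this (theta_ne_pair _ _)
  have h0 : (⟨0, by omega⟩ : Fin n) = k := hkey _
  have h1 : (⟨1, by omega⟩ : Fin n) = k := hkey _
  have : (⟨0, by omega⟩ : Fin n) = (⟨1, by omega⟩ : Fin n) := h0.trans h1.symm
  simp [Fin.ext_iff] at this

lemma sMap_ne_xi_pair (k l : Fin n) (α : Brandt n) (p q : Fin n) :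
    sMap k l α ≠ xi (pair p q) := by
  intro h
  have := congrFun h (theta n)
  rw [sMap_theta, xi_apply] at this
  exact (theta_ne_pair _ _) this

lemma sum_nMap (hn : 2 ≤ n) {y z : MB n} (hy : Cls y) (hz : Cls z)
    {σ : Equiv.Perm (Fin n)} {l q : Fin n} (h : y + z = nMap l q σ) :
    (∃ qy, y = nMap l qy σ) ∧ ∃ c, z = xi c := by
  rcases hz with ⟨d, rfl⟩ | ⟨σ₂, l₂, q₂, rfl⟩ | ⟨k, l', α, rfl⟩
  · rcases hy with ⟨c, rfl⟩ | ⟨σ₁, l₁, q₁, rfl⟩ | ⟨k, l', α, rfl⟩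
    · rw [xi_add_xi] at h
      exact absurd h (xi_ne_nMap _ _ _ _)
    · rcases brandt_cases d with rfl | ⟨p, q', rfl⟩
      · rw [add_xi_theta] at h
        exact absurd h (xi_ne_nMap _ _ _ _)
      · by_cases hqp : q₁ = p
        · subst hqp
          rw [nMap_add_xi_matched] at h
          obtain ⟨h1, h2, h3⟩ := nMap_inj h
          subst h1; subst h2; subst h3
          exact ⟨⟨q₁, rfl⟩, ⟨_, rfl⟩⟩
        · rw [nMap_add_xi_unmatched _ _ _ hqp] at h
          exact absurd h (xi_ne_nMap _ _ _ _)
    · rw [sMap_add] at h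
      exact absurd h (sMap_ne_nMap hn _ _ _ _ _ _)
  · rcases hy with ⟨c, rfl⟩ | ⟨σ₁, l₁, q₁, rfl⟩ | ⟨k, l', α, rfl⟩
    · rcases brandt_cases c with rfl | ⟨p, r, rfl⟩
      · rw [xi_theta_add] at h
        exact absurd h (xi_ne_nMap _ _ _ _)
      · rw [xi_add_nMap] at h
        exact absurd h (sMap_ne_nMap hn _ _ _ _ _ _)
    · by_cases hl : l₁ = l₂
      · subst hl
        rw [nMap_add_nMap_same] at h
        exact absurd h (sMap_ne_nMap hn _ _ _ _ _ _)
      · rw [nMap_add_nMap_diff hl] at h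
        exact absurd h (xi_ne_nMap _ _ _ _)
    · rw [sMap_add] at h
      exact absurd h (sMap_ne_nMap hn _ _ _ _ _ _)
  · rw [add_sMap] at h
    exact absurd h (sMap_ne_nMap hn _ _ _ _ _ _)

lemma sum_const {y z : MB n} (hy : Cls y) (hz : Cls z)
    {p q : Fin n} (h : y + z = xi (pair p q)) :
    (∃ r, y = xi (pair p r)) ∧ ∃ d, z = xi d := by
  have hyx : ∃ c, y = xi c := by
    rcases hy with hc | ⟨σ₁, l₁, q₁, rfl⟩ | ⟨k, l', α, rfl⟩
    · exact hc
    · -- nMap + z = xi pair : impossible since (nMap + z) θ = θ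
      exfalso
      have := congrFun h (theta n)
      rw [mb_add_apply, nMap_theta, theta_add', xi_apply] at this
      exact (theta_ne_pair _ _) this
    · exfalso
      have := congrFun h (theta n)
      rw [mb_add_apply, sMap_theta, theta_add', xi_apply] at this
      exact (theta_ne_pair _ _) this
  obtain ⟨c, rfl⟩ := hyx
  have hzx : ∃ d, z = xi d := by
    rcases hz with hd | ⟨σ₂, l₂, q₂, rfl⟩ | ⟨k, l', α, rfl⟩
    · exact hd
    · exfalso
      have := congrFun h (theta n)
      rw [mb_add_apply, nMap_theta, add_theta', xi_apply] at this
      exact (theta_ne_pair _ _) this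
    · exfalso
      have := congrFun h (theta n)
      rw [mb_add_apply, sMap_theta, add_theta', xi_apply] at this
      exact (theta_ne_pair _ _) this
  obtain ⟨d, rfl⟩ := hzx
  rw [xi_add_xi] at h
  obtain ⟨r, hr1, -⟩ := add_eq_pair (xi_inj h)
  exact ⟨⟨r, by rw [hr1]⟩, ⟨d, rfl⟩⟩

end Aux4

section Aux5

open Brandt

variable {n : ℕ}

lemma mem_aplus_of_affine {f : MB n} (hf : IsAffine f) : f ∈ AplusSet n :=
  AddSubsemigroup.subset_closure hf

lemma gen_nMap (hn : 2 ≤ n) {U : Set (MB n)}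
    (hU : (AddSubsemigroup.closure U : Set (MB n)) = AplusSet n)
    {x : MB n} (hx : x ∈ AddSubsemigroup.closure U) :
    ∀ (σ : Equiv.Perm (Fin n)) (l q : Fin n), x = nMap l q σ → ∃ q', nMap l q' σ ∈ U := by
  induction hx using AddSubsemigroup.closure_induction with
  | mem x hxU => exact fun σ l q hx => ⟨q, hx ▸ hxU⟩
  | add y z hy hz ihy ihz =>
    rintro σ l q h
    have hyA : Cls y := aplus_class (by rw [← hU]; exact hy)
    have hzA : Cls z := aplus_class (by rw [← hU]; exact hz)
    obtain ⟨⟨qy, hqy⟩, -⟩ := sum_nMap hn hyA hzA h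
    exact ihy σ l qy hqy

lemma gen_xi {U : Set (MB n)}
    (hU : (AddSubsemigroup.closure U : Set (MB n)) = AplusSet n)
    {x : MB n} (hx : x ∈ AddSubsemigroup.closure U) :
    ∀ p q : Fin n, x = xi (pair p q) → ∃ r, xi (pair p r) ∈ U := by
  induction hx using AddSubsemigroup.closure_induction with
  | mem x hxU => exact fun p q hx => ⟨q, hx ▸ hxU⟩
  | add y z hy hz ihy ihz =>
    rintro p q h
    have hyA : Cls y := aplus_class (by rw [← hU]; exact hy)
    have hzA : Cls z := aplus_class (by rw [← hU]; exact hz)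
    obtain ⟨⟨r, hr⟩, -⟩ := sum_const hyA hzA h
    exact ihy p r hr

lemma lower_bound (hn : 2 ≤ n) {U : Set (MB n)}
    (hU : (AddSubsemigroup.closure U : Set (MB n)) = AplusSet n) :
    n * (n.factorial + 1) ≤ U.ncard := by
  have hmemN : ∀ (σ : Equiv.Perm (Fin n)) (l : Fin n), nMap l l σ ∈ AddSubsemigroup.closure U := by
    intro σ l
    have h : nMap l l σ ∈ AplusSet n := mem_aplus_of_affine (isAffine_nMap l l σ)
    rw [← hU] at h
    exact h
  have hQ : ∀ (σ : Equiv.Perm (Fin n)) (l : Fin n), ∃ q', nMap l q' σ ∈ U := by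
    intro σ l
    exact gen_nMap hn hU (hmemN σ l) σ l l rfl
  choose Q hQmem using hQ
  have hR : ∀ p : Fin n, ∃ r, xi (pair p r) ∈ U := by
    intro p
    have h : xi (pair p p) ∈ AplusSet n := mem_aplus_of_affine (isAffine_xi _)
    rw [← hU] at h
    exact gen_xi hU h p p rfl
  choose R hRmem using hR
  set F : (Equiv.Perm (Fin n) × Fin n) ⊕ Fin n → MB n :=
    Sum.elim (fun w => nMap w.2 (Q w.1 w.2) w.1) (fun p => xi (pair p (R p))) with hF
  have hrange : Set.range F ⊆ U := by
    rintro x ⟨w, rfl⟩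
    rcases w with w | p
    · exact hQmem w.1 w.2
    · exact hRmem p
  have hinj : Function.Injective F := by
    rintro (w | p) (w' | p') h
    · simp only [hF, Sum.elim_inl] at h
      obtain ⟨h1, -, h3⟩ := nMap_inj h
      exact congrArg Sum.inl (Prod.ext h3 h1)
    · simp only [hF, Sum.elim_inl, Sum.elim_inr] at h
      exact absurd h.symm (xi_ne_nMap _ _ _ _)
    · simp only [hF, Sum.elim_inl, Sum.elim_inr] at h
      exact absurd h (xi_ne_nMap _ _ _ _)
    · simp only [hF, Sum.elim_inr] at h
      obtain ⟨h1, -⟩ := pair_inj (xi_inj h)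
      rw [h1]
  have hcard : Nat.card ((Equiv.Perm (Fin n) × Fin n) ⊕ Fin n) = n * (n.factorial + 1) := by
    simp [Nat.card_eq_fintype_card, Fintype.card_perm]
    ring
  calc n * (n.factorial + 1) = Nat.card ((Equiv.Perm (Fin n) × Fin n) ⊕ Fin n) := hcard.symm
    _ = (Set.range F).ncard := by
        rw [← Nat.card_range_of_injective hinj, Nat.card_coe_set_eq]
    _ ≤ U.ncard := Set.ncard_le_ncard hrange (Set.toFinite U)

end Aux5

section Aux6

open Brandt
open Fin.NatCast
open Fin.CommRing

variable {n : ℕ}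

lemma rot_apply [NeZero n] (x : Fin n) : finRotate n x = x + 1 := by
  have hn : 1 ≤ n := Nat.one_le_iff_ne_zero.mpr (NeZero.ne n)
  obtain ⟨m, rfl⟩ : ∃ m, n = m + 1 := ⟨n - 1, by omega⟩
  exact finRotate_succ_apply x

lemma rot_iter [NeZero n] (k : ℕ) (p : Fin n) :
    (finRotate n)^[k] p = p + (k : Fin n) := by
  induction k with
  | zero => simp
  | succ k ih =>
    rw [Function.iterate_succ_apply', ih, rot_apply]
    push_cast
    ring

lemma rot_cover [NeZero n] (p q : Fin n) :
    ∃ k : ℕ, (finRotate n)^[k + 1] p = q := by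
  refine ⟨(q - p - 1 : Fin n).val, ?_⟩
  rw [rot_iter]
  push_cast [Fin.cast_val_eq_self]
  ring

lemma xi_mem_closure (hn : 2 ≤ n) (c : Brandt n) :
    xi c ∈ AddSubsemigroup.closure (setS n ∪ setT n) := by
  haveI : NeZero n := ⟨by omega⟩
  have hbase : ∀ i : Fin n, xi (pair i (finRotate n i)) ∈
      AddSubsemigroup.closure (setS n ∪ setT n) := fun i =>
    AddSubsemigroup.subset_closure (Or.inl ⟨i, rfl⟩)
  have hstep : ∀ (p a : Fin n), xi (pair p a) ∈ AddSubsemigroup.closure (setS n ∪ setT n) →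
      xi (pair p (finRotate n a)) ∈ AddSubsemigroup.closure (setS n ∪ setT n) := by
    intro p a hmem
    have hsum : xi (pair p a) + xi (pair a (finRotate n a)) = xi (pair p (finRotate n a)) := by
      rw [xi_add_xi, pair_add_pair, if_pos rfl]
    rw [← hsum]
    exact AddSubsemigroup.add_mem _ hmem (hbase a)
  have hiter : ∀ (k : ℕ) (p : Fin n), xi (pair p ((finRotate n)^[k + 1] p)) ∈
      AddSubsemigroup.closure (setS n ∪ setT n) := by
    intro k
    induction k with
    | zero => intro p; simpa using hbase p
    | succ k ih =>
      intro p
      rw [Function.iterate_succ_apply']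
      exact hstep p _ (ih p)
  have hpairs : ∀ p q : Fin n, xi (pair p q) ∈ AddSubsemigroup.closure (setS n ∪ setT n) := by
    intro p q
    obtain ⟨k, hk⟩ := rot_cover p q
    rw [← hk]
    exact hiter k p
  rcases brandt_cases c with rfl | ⟨p, q, rfl⟩
  · -- the constant θ map
    have h1 : (⟨1, by omega⟩ : Fin n) ≠ (⟨0, by omega⟩ : Fin n) := by
      intro h
      simpa using congrArg Fin.val h
    have hsum : xi (pair ⟨0, by omega⟩ ⟨1, by omega⟩) + xi (pair ⟨0, by omega⟩ ⟨1, by omega⟩)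
        = xi (theta n) := by
      rw [xi_add_xi, pair_add_pair, if_neg h1]
    rw [← hsum]
    exact AddSubsemigroup.add_mem _ (hpairs _ _) (hpairs _ _)
  · exact hpairs p q

lemma gmap_add_xi' (σ : Equiv.Perm (Fin n)) (i r : Fin n) :
    gmap σ + xi (pair i r) = nMap (σ.symm i) r σ := gmap_add_xi σ i r

lemma nMap_mem_closure (hn : 2 ≤ n) (l q : Fin n) (σ : Equiv.Perm (Fin n)) :
    nMap l q σ ∈ AddSubsemigroup.closure (setS n ∪ setT n) := by
  have htT : nMap l (finRotate n (σ l)) σ ∈ setT n := by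
    refine ⟨gmap σ, xi (pair (σ l) (finRotate n (σ l))), ⟨isEndo_gmap σ, bijective_gmap σ⟩,
      ⟨σ l, rfl⟩, ?_⟩
    rw [gmap_add_xi, Equiv.symm_apply_apply]
  have hsum : nMap l (finRotate n (σ l)) σ + xi (pair (finRotate n (σ l)) q) = nMap l q σ :=
    nMap_add_xi_matched l _ q σ
  rw [← hsum]
  exact AddSubsemigroup.add_mem _ (AddSubsemigroup.subset_closure (Or.inr htT))
    (xi_mem_closure hn _)

lemma setS_eq : setS n = Set.range (fun i : Fin n => xi (pair i (finRotate n i))) :=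
  Set.ext fun f => ⟨fun ⟨i, h⟩ => ⟨i, h.symm⟩, fun ⟨i, h⟩ => ⟨i, h.symm⟩⟩

lemma xi_not_bijective (hn : 2 ≤ n) (c : Brandt n) : ¬ Function.Bijective (xi c : MB n) := by
  intro h
  have := h.injective (a₁ := theta n) (a₂ := pair ⟨0, by omega⟩ ⟨0, by omega⟩) rfl
  exact (theta_ne_pair _ _) this

lemma setT_eq (hn : 2 ≤ n) : setT n = Set.range
    (fun w : Equiv.Perm (Fin n) × Fin n => nMap (w.1.symm w.2) (finRotate n w.2) w.1) := by
  ext f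
  constructor
  · rintro ⟨g, h, ⟨hge, hgb⟩, ⟨i, rfl⟩, rfl⟩
    rcases endo_class hge with rfl | ⟨j, rfl⟩ | ⟨σ, rfl⟩
    · exact absurd hgb (xi_not_bijective hn _)
    · exact absurd hgb (xi_not_bijective hn _)
    · exact ⟨(σ, i), (gmap_add_xi σ i _).symm⟩
  · rintro ⟨⟨σ, i⟩, rfl⟩
    exact ⟨gmap σ, xi (pair i (finRotate n i)), ⟨isEndo_gmap σ, bijective_gmap σ⟩,
      ⟨i, rfl⟩, (gmap_add_xi σ i _).symm⟩

end Aux6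

section Aux7

open Brandt

variable {n : ℕ}

lemma setS_ncard (hn : 2 ≤ n) : (setS n).ncard = n := by
  rw [setS_eq]
  have hinj : Function.Injective (fun i : Fin n => (xi (pair i (finRotate n i)) : MB n)) := by
    intro i j h
    exact (pair_inj (xi_inj h)).1
  rw [← Nat.card_coe_set_eq, Nat.card_range_of_injective hinj, Nat.card_eq_fintype_card,
    Fintype.card_fin]

lemma setT_ncard (hn : 2 ≤ n) : (setT n).ncard = n.factorial * n := by
  rw [setT_eq hn]
  have hinj : Function.Injective
      (fun w : Equiv.Perm (Fin n) × Fin n => nMap (w.1.symm w.2) (finRotate n w.2) w.1) := by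
    rintro ⟨σ, i⟩ ⟨σ', i'⟩ h
    obtain ⟨-, h2, h3⟩ := nMap_inj h
    have hi : i = i' := (finRotate n).injective h2
    rw [Prod.ext_iff]
    exact ⟨h3, hi⟩
  rw [← Nat.card_coe_set_eq, Nat.card_range_of_injective hinj, Nat.card_eq_fintype_card]
  simp [Fintype.card_perm]

lemma setS_disj_setT (hn : 2 ≤ n) : Disjoint (setS n) (setT n) := by
  rw [Set.disjoint_left]
  rintro f ⟨i, rfl⟩ hT
  rw [setT_eq hn] at hT
  obtain ⟨⟨σ, j⟩, hj⟩ := hT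
  exact (xi_ne_nMap _ _ _ _) hj.symm

lemma union_ncard (hn : 2 ≤ n) : (setS n ∪ setT n).ncard = n * (n.factorial + 1) := by
  rw [Set.ncard_union_eq (setS_disj_setT hn) (Set.toFinite _) (Set.toFinite _),
    setS_ncard hn, setT_ncard hn]
  ring

lemma union_sub (hn : 2 ≤ n) : setS n ∪ setT n ⊆ AplusSet n := by
  rintro f (⟨i, rfl⟩ | ⟨g, h, ⟨hge, hgb⟩, ⟨i, rfl⟩, rfl⟩)
  · exact mem_aplus_of_affine (isAffine_xi _)
  · exact mem_aplus_of_affine ⟨g, pair i (finRotate n i), hge, rfl⟩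

lemma union_closure (hn : 2 ≤ n) :
    (AddSubsemigroup.closure (setS n ∪ setT n) : Set (MB n)) = AplusSet n := by
  have h : AddSubsemigroup.closure (setS n ∪ setT n) = Aplus n := by
    apply le_antisymm
    · exact AddSubsemigroup.closure_le.mpr (union_sub hn)
    · apply AddSubsemigroup.closure_le.mpr
      intro f hf
      rcases affine_class hf with ⟨c, rfl⟩ | ⟨σ, l, q, rfl⟩
      · exact xi_mem_closure hn c
      · exact nMap_mem_closure hn l q σ
  rw [h]
  rfl

end Aux7

/-- For `n ≥ 2`, the lower rank of `A⁺(Bₙ)` is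
`r₂(A⁺(Bₙ)) = n(n! + 1)`. -/
theorem stmt_7 (n : ℕ) (hn : 2 ≤ n) :
    IsLeast {m : ℕ | ∃ U : Set (MB n), U ⊆ AplusSet n ∧
      (AddSubsemigroup.closure U : Set (MB n)) = AplusSet n ∧ U.ncard = m}
      (n * (n.factorial + 1)) := by
  constructor
  · exact ⟨setS n ∪ setT n, union_sub hn, union_closure hn, union_ncard hn⟩
  · rintro m ⟨U, hUsub, hU, rfl⟩
    exact lower_bound hn hU
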